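/- For every deterministic protagonist policy π and every (x,u,a) ∈ X × U × A, the value function of π satisfies the self-consistency condition Q^{π}(x,u,a) = r(x,u,a) + γ · min_{a' ∈ A} Q^{π}(x', π(x'), a'), where x' = f x u a. -/

import Mathlib

/-- One step of the closed-loop system driven by deterministic policies `π` and `μ`. -/
def stepFn {X U A : Type*} (f : X → U → A → X) (π : X → U) (μ : X → A)
    (p : X × U × A) : X × U × A :=
  (f p.1 p.2.1 p.2.2, π (f p.1 p.2.1 p.2.2), μ (f p.1 p.2.1 p.2.2))

/-- Value function `Q^{π,μ}(x,u,a) = ∑_{t=0}^{∞} γ^t · r(x_t, u_t, a_t)` of a pair of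
deterministic protagonist/adversary policies. -/
noncomputable def Qr {X U A : Type*} (f : X → U → A → X) (r : X → U → A → ℝ) (γ : ℝ)
    (π : X → U) (μ : X → A) (p : X × U × A) : ℝ :=
  ∑' t : ℕ, γ ^ t *
    r ((stepFn f π μ)^[t] p).1 ((stepFn f π μ)^[t] p).2.1 ((stepFn f π μ)^[t] p).2.2

/-- Value function `Q^{π}` of a deterministic protagonist policy: the minimum over all
deterministic adversary policies `μ` of `Q^{π,μ}`. -/
noncomputable def Qrpi {X U A : Type*} (f : X → U → A → X) (r : X → U → A → ℝ) (γ : ℝ)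
    (π : X → U) (p : X × U × A) : ℝ :=
  ⨅ μ : X → A, Qr f r γ π μ p

open Function

section Aux

variable {X U A : Type*} [Fintype X] [Nonempty X] [Fintype U] [Nonempty U]
  [Fintype A] [Nonempty A]

/-- The reward as a function of a triple. -/
def rfun (r : X → U → A → ℝ) (p : X × U × A) : ℝ := r p.1 p.2.1 p.2.2

/-- Next state. -/
def nxt (f : X → U → A → X) (p : X × U × A) : X := f p.1 p.2.1 p.2.2

/-- Bellman operator for a fixed adversary policy. -/
noncomputable def Tmu (f : X → U → A → X) (r : X → U → A → ℝ) (γ : ℝ) (π : X → U)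
    (μ : X → A) (q : X × U × A → ℝ) : X × U × A → ℝ :=
  fun p => rfun r p + γ * q (stepFn f π μ p)

/-- Bellman optimality operator (for the minimizing adversary). -/
noncomputable def Topt (f : X → U → A → X) (r : X → U → A → ℝ) (γ : ℝ) (π : X → U)
    (q : X × U × A → ℝ) : X × U × A → ℝ :=
  fun p => rfun r p + γ * ⨅ a' : A, q (nxt f p, π (nxt f p), a')

lemma abs_ciInf_sub_ciInf {ι : Type*} [Fintype ι] [Nonempty ι] (h g : ι → ℝ) (c : ℝ)
    (hc : ∀ i, |h i - g i| ≤ c) : |(⨅ i, h i) - ⨅ i, g i| ≤ c := by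
  rw [abs_le]
  obtain ⟨i₀, hi₀⟩ := exists_eq_ciInf_of_finite (f := h)
  obtain ⟨i₁, hi₁⟩ := exists_eq_ciInf_of_finite (f := g)
  have h0 := abs_le.mp (hc i₀)
  have h1 := abs_le.mp (hc i₁)
  have hbh : (⨅ i, h i) ≤ h i₁ := ciInf_le (Set.Finite.bddBelow (Set.finite_range h)) i₁
  have hbg : (⨅ i, g i) ≤ g i₀ := ciInf_le (Set.Finite.bddBelow (Set.finite_range g)) i₀
  constructor <;> [skip; skip] <;> nlinarith [hi₀, hi₁]

lemma summable_Qr (f : X → U → A → X) (r : X → U → A → ℝ) {γ : ℝ}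
    (hγ : γ ∈ Set.Ioo (0 : ℝ) 1) (π : X → U) (μ : X → A) (p : X × U × A) :
    Summable (fun t : ℕ => γ ^ t * rfun r ((stepFn f π μ)^[t] p)) := by
  obtain ⟨C, hC⟩ := Finite.exists_le (fun q : X × U × A => |rfun r q|)
  apply Summable.of_norm_bounded (g := fun t => γ ^ t * C)
  · exact (summable_geometric_of_lt_one hγ.1.le hγ.2).mul_right C
  · intro t
    rw [Real.norm_eq_abs, abs_mul, abs_pow, abs_of_pos hγ.1]
    exact mul_le_mul_of_nonneg_left (hC _) (pow_nonneg hγ.1.le t)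

lemma Qr_step (f : X → U → A → X) (r : X → U → A → ℝ) {γ : ℝ}
    (hγ : γ ∈ Set.Ioo (0 : ℝ) 1) (π : X → U) (μ : X → A) (p : X × U × A) :
    Qr f r γ π μ p = rfun r p + γ * Qr f r γ π μ (stepFn f π μ p) := by
  have hs := summable_Qr f r hγ π μ p
  have : Qr f r γ π μ p = ∑' t : ℕ, γ ^ t * rfun r ((stepFn f π μ)^[t] p) := rfl
  rw [this, hs.tsum_eq_zero_add]
  simp only [pow_zero, one_mul, iterate_zero, id_eq]
  congr 1
  have : Qr f r γ π μ (stepFn f π μ p)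
      = ∑' t : ℕ, γ ^ t * rfun r ((stepFn f π μ)^[t] (stepFn f π μ p)) := rfl
  rw [this, ← tsum_mul_left]
  congr 1; funext t
  rw [iterate_succ_apply]
  ring

lemma Qr_isFixedPt (f : X → U → A → X) (r : X → U → A → ℝ) {γ : ℝ}
    (hγ : γ ∈ Set.Ioo (0 : ℝ) 1) (π : X → U) (μ : X → A) :
    IsFixedPt (Tmu f r γ π μ) (Qr f r γ π μ) := by
  funext p
  exact (Qr_step f r hγ π μ p).symm

lemma contracting_Tmu (f : X → U → A → X) (r : X → U → A → ℝ) {γ : ℝ}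
    (hγ : γ ∈ Set.Ioo (0 : ℝ) 1) (π : X → U) (μ : X → A) :
    ContractingWith ⟨γ, hγ.1.le⟩ (Tmu f r γ π μ) := by
  refine ⟨by exact_mod_cast hγ.2, LipschitzWith.of_dist_le_mul fun q q' => ?_⟩
  refine (dist_pi_le_iff (mul_nonneg (NNReal.coe_nonneg _) dist_nonneg)).2 ?_
  intro p
  rw [Real.dist_eq]
  have : Tmu f r γ π μ q p - Tmu f r γ π μ q' p
      = γ * (q (stepFn f π μ p) - q' (stepFn f π μ p)) := by
    simp only [Tmu]; ring
  rw [this, abs_mul, abs_of_pos hγ.1]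
  exact mul_le_mul_of_nonneg_left
    (by rw [← Real.dist_eq]; exact dist_le_pi_dist q q' _) hγ.1.le

lemma contracting_Topt (f : X → U → A → X) (r : X → U → A → ℝ) {γ : ℝ}
    (hγ : γ ∈ Set.Ioo (0 : ℝ) 1) (π : X → U) :
    ContractingWith ⟨γ, hγ.1.le⟩ (Topt f r γ π) := by
  refine ⟨by exact_mod_cast hγ.2, LipschitzWith.of_dist_le_mul fun q q' => ?_⟩
  refine (dist_pi_le_iff (mul_nonneg (NNReal.coe_nonneg _) dist_nonneg)).2 ?_
  intro p
  rw [Real.dist_eq]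
  have : Topt f r γ π q p - Topt f r γ π q' p
      = γ * ((⨅ a' : A, q (nxt f p, π (nxt f p), a'))
           - ⨅ a' : A, q' (nxt f p, π (nxt f p), a')) := by
    simp only [Topt]; ring
  rw [this, abs_mul, abs_of_pos hγ.1]
  refine mul_le_mul_of_nonneg_left ?_ hγ.1.le
  exact abs_ciInf_sub_ciInf _ _ _ fun a' => by
    rw [← Real.dist_eq]; exact dist_le_pi_dist q q' _

lemma monotone_Tmu (f : X → U → A → X) (r : X → U → A → ℝ) {γ : ℝ}
    (hγ : γ ∈ Set.Ioo (0 : ℝ) 1) (π : X → U) (μ : X → A) :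
    Monotone (Tmu f r γ π μ) := by
  intro q q' hq p
  exact add_le_add le_rfl (mul_le_mul_of_nonneg_left (hq _) hγ.1.le)

lemma main_eq (f : X → U → A → X) (r : X → U → A → ℝ) {γ : ℝ}
    (hγ : γ ∈ Set.Ioo (0 : ℝ) 1) (π : X → U) :
    Qrpi f r γ π = (contracting_Topt f r hγ π).fixedPoint (Topt f r γ π) := by
  set q := (contracting_Topt f r hγ π).fixedPoint (Topt f r γ π) with hqdef
  have hfix : Topt f r γ π q = q := (contracting_Topt f r hγ π).fixedPoint_isFixedPt
  -- greedy adversary policy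
  have hgreedy : ∀ y : X, ∃ a : A, q (y, π y, a) = ⨅ a' : A, q (y, π y, a') :=
    fun y => exists_eq_ciInf_of_finite
  choose μstar hμstar using hgreedy
  -- q is a fixed point of Tmu μstar
  have hfixμ : IsFixedPt (Tmu f r γ π μstar) q := by
    have : Tmu f r γ π μstar q = Topt f r γ π q := by
      funext p
      simp only [Tmu, Topt]
      congr 1
      have hstep : stepFn f π μstar p = (nxt f p, π (nxt f p), μstar (nxt f p)) := rfl
      rw [hstep, hμstar]
    rw [IsFixedPt, this, hfix]
  -- hence q = Qr of greedy policy
  have hqQr : Qr f r γ π μstar = q :=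
    ((contracting_Tmu f r hγ π μstar).fixedPoint_unique
      (Qr_isFixedPt f r hγ π μstar)).trans
      ((contracting_Tmu f r hγ π μstar).fixedPoint_unique hfixμ).symm
  -- q is a lower bound of Qr μ for every μ
  have hlow : ∀ μ : X → A, q ≤ Qr f r γ π μ := by
    intro μ
    have hle : q ≤ Tmu f r γ π μ q := by
      intro p
      have h1 : q p = Topt f r γ π q p := by rw [hfix]
      rw [h1]
      exact add_le_add le_rfl (mul_le_mul_of_nonneg_left
        (ciInf_le (Set.Finite.bddBelow (Set.finite_range _)) (μ (nxt f p))) hγ.1.le)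
    have hiter : ∀ n : ℕ, q ≤ (Tmu f r γ π μ)^[n] q := by
      intro n
      induction n with
      | zero => simp
      | succ n ih =>
        rw [iterate_succ_apply']
        exact hle.trans (monotone_Tmu f r hγ π μ ih)
    have htend : Filter.Tendsto (fun n => (Tmu f r γ π μ)^[n] q) Filter.atTop
        (nhds (Qr f r γ π μ)) := by
      have := (contracting_Tmu f r hγ π μ).tendsto_iterate_fixedPoint q
      rwa [← (contracting_Tmu f r hγ π μ).fixedPoint_unique (Qr_isFixedPt f r hγ π μ)]
        at this
    intro p
    have htendp : Filter.Tendsto (fun n => (Tmu f r γ π μ)^[n] q p) Filter.atTop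
        (nhds (Qr f r γ π μ p)) := by
      exact (tendsto_pi_nhds.mp htend) p
    exact ge_of_tendsto htendp (Filter.Eventually.of_forall fun n => hiter n p)
  -- conclude
  funext p
  refine le_antisymm ?_ ?_
  · rw [Qrpi, ← hqQr]
    exact ciInf_le (Set.Finite.bddBelow (Set.finite_range _)) μstar
  · exact le_ciInf fun μ => hlow μ p

end Aux

/-- Self-consistency condition for `Q^{π}`. -/
theorem value_self_consistency_policy {X U A : Type*}
    [Fintype X] [Nonempty X] [Fintype U] [Nonempty U] [Fintype A] [Nonempty A]
    (f : X → U → A → X) (r : X → U → A → ℝ) (γ : ℝ) (hγ : γ ∈ Set.Ioo (0 : ℝ) 1)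
    (π : X → U) (x : X) (u : U) (a : A) :
    Qrpi f r γ π (x, u, a) =
      r x u a + γ * ⨅ a' : A, Qrpi f r γ π (f x u a, π (f x u a), a') := by
  have h := main_eq f r hγ π
  set q := (contracting_Topt f r hγ π).fixedPoint (Topt f r γ π) with hqdef
  have hfix : Topt f r γ π q = q := (contracting_Topt f r hγ π).fixedPoint_isFixedPt
  calc Qrpi f r γ π (x, u, a) = q (x, u, a) := by rw [h]
    _ = Topt f r γ π q (x, u, a) := by rw [hfix]
    _ = r x u a + γ * ⨅ a' : A, q (f x u a, π (f x u a), a') := rfl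
    _ = r x u a + γ * ⨅ a' : A, Qrpi f r γ π (f x u a, π (f x u a), a') := by rw [h]
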